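/- (Modified triples for l = 3.) Let m, n ≥ 3 and set N = m + n − 3. Then the Brauer representation triples γ for the pair (m,n) with ht(γ) ≤ N which possess at least one N-excluded ancestor are exactly the three triples (1, [2,1^{m−3}], 1^{n−1}), (1, 1^{m−1}, [2,1^{n−3}]) and (2, 1^{m−2}, 1^{n−2}); in particular there are exactly 3 = Z_univ(2) of them. -/

import Mathlib

/-! The quantity `ht γ + k` never increases along the parent relation: a parent either removes a
box from `γ₋`, which cannot raise the number of parts, or trades one unit of `k` for a new box of
`γ₊`, which raises the number of parts by at most one. Conversely, adding a new part `1` to `γ₊` at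
each step realises `ht γ + k` as the height of an ancestor. Hence a triple with `ht γ ≤ N` has an
`N`-excluded ancestor iff `N < ht γ + k`. A partition of `s` has at most `s` parts, so
`ht γ ≤ m + n - 2k`, and for `N = m + n - 3` this leaves only `k = 2` with `γ₊`, `γ₋` all ones, or
`k = 1` with exactly one part missing in total; a partition of `s` into `s - 1` parts is
`[2, 1^(s-2)]`. -/

/-- A Brauer representation triple for the pair `(m, n)`: a natural number
`k ≤ min m n`, a partition `γ₊` of `m - k` and a partition `γ₋` of `n - k`. -/
structure BRT (m n : ℕ) where
  k : ℕ
  k_le : k ≤ min m n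
  gp : Nat.Partition (m - k)
  gm : Nat.Partition (n - k)

namespace BRT

/-- The height of a Brauer representation triple: the total number of parts of the
two partitions (the sum of the first-column lengths of the Young diagrams). -/
def ht {m n : ℕ} (γ : BRT m n) : ℕ :=
  Multiset.card γ.gp.parts + Multiset.card γ.gm.parts

end BRT

/-- `AddBox lam mu` : the multiset of parts `mu` is obtained from the multiset of parts
`lam` by adding one box to the Young diagram (either as a new part equal to `1`, or by
increasing one existing part by `1`). -/
def AddBox (lam mu : Multiset ℕ) : Prop :=
  mu = 1 ::ₘ lam ∨ ∃ a ∈ lam, mu = (a + 1) ::ₘ lam.erase a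

/-- `γ'` (a triple at depth `d+1`) is a parent of `γ` (a triple at depth `d`):
either (a) `k' = k`, `γ₊' = γ₊` and `γ₋` is obtained from `γ₋'` by adding one box, or
(b) `k' = k - 1`, `γ₋' = γ₋` and `γ₊'` is obtained from `γ₊` by adding one box. -/
def IsParent {m n₁ n₂ : ℕ} (γ : BRT m n₁) (γ' : BRT m n₂) : Prop :=
  (γ'.k = γ.k ∧ γ'.gp.parts = γ.gp.parts ∧ AddBox γ'.gm.parts γ.gm.parts)
  ∨ (γ'.k = γ.k - 1 ∧ γ'.gm.parts = γ.gm.parts ∧ AddBox γ.gp.parts γ'.gp.parts)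

/-- `IsAncestor m n d d' γ γ'` : the triple `γ'` at depth `d'` for the pair `(m,n)` is an
ancestor of the triple `γ` at depth `d`, i.e. `γ'` is reachable from `γ` by iterating
the parent relation `d' - d` times (one step for each unit increase of depth). -/
inductive IsAncestor (m n : ℕ) : ∀ (d d' : ℕ), BRT m (n - d) → BRT m (n - d') → Prop
  | step {d : ℕ} (γ : BRT m (n - d)) (γ' : BRT m (n - (d + 1))) :
      IsParent γ γ' → IsAncestor m n d (d + 1) γ γ'
  | tail {d d' : ℕ} {γ : BRT m (n - d)} {γ' : BRT m (n - d')} (γ'' : BRT m (n - (d' + 1))) :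
      IsAncestor m n d d' γ γ' → IsParent γ' γ'' → IsAncestor m n d (d' + 1) γ γ''

/-- `Zuniv s` : the number of quadruples `(Δ, k, λ₁, λ₂)` with `Δ ≥ 1`, `k ≥ 0` natural
numbers and `λ₁, λ₂` partitions (of arbitrary natural numbers) such that
`Δ + 2k + |λ₁| + |λ₂| = s`. -/
noncomputable def Zuniv (s : ℕ) : ℕ :=
  Nat.card {q : (ℕ × ℕ) × (Σ a : ℕ, Nat.Partition a) × (Σ a : ℕ, Nat.Partition a) //
    1 ≤ q.1.1 ∧ q.1.1 + 2 * q.1.2 + q.2.1.1 + q.2.2.1 = s}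

/-- `p a` : the number of partitions of `a` (with `p 0 = 1`). -/
def p (a : ℕ) : ℕ := Fintype.card (Nat.Partition a)

namespace Multiset

variable {s : Multiset ℕ}

theorem card_le_sum_of_pos (hs : ∀ x ∈ s, 0 < x) : card s ≤ s.sum := by
  simpa using card_nsmul_le_sum (a := 1) hs

theorem add_card_le_sum_add_one_of_pos (hs : ∀ x ∈ s, 0 < x) {a : ℕ} (ha : a ∈ s) :
    a + card s ≤ s.sum + 1 := by
  rw [← cons_erase ha] at hs ⊢
  have := card_le_sum_of_pos fun x hx => hs x (mem_cons_of_mem hx)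
  simp only [card_cons, sum_cons]
  omega

theorem eq_replicate_one_of_card_eq_sum (hs : ∀ x ∈ s, 0 < x) (h : card s = s.sum) :
    s = replicate (card s) 1 :=
  eq_replicate_card.2 fun a ha => by
    have := add_card_le_sum_add_one_of_pos hs ha
    have := hs a ha
    omega

theorem eq_two_cons_replicate_one_of_card_add_one_eq_sum (hs : ∀ x ∈ s, 0 < x)
    (h : card s + 1 = s.sum) : s = 2 ::ₘ replicate (card s - 1) 1 := by
  obtain ⟨a, ha, ha2⟩ : ∃ a ∈ s, 2 ≤ a := by
    by_contra! hle
    have hrep : s = replicate (card s) 1 :=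
      eq_replicate_card.2 fun a ha => by have := hle a ha; have := hs a ha; omega
    have := congrArg sum hrep
    simp only [sum_replicate, smul_eq_mul, mul_one] at this
    omega
  obtain rfl : a = 2 := by
    have := add_card_le_sum_add_one_of_pos hs ha
    omega
  rw [← cons_erase ha] at hs h ⊢
  have hs' : ∀ x ∈ s.erase 2, 0 < x := fun x hx => hs x (mem_cons_of_mem hx)
  simp only [card_cons, sum_cons] at h ⊢
  rw [eq_replicate_one_of_card_eq_sum hs' (by omega), card_replicate]
  simp

end Multiset

namespace Nat.Partition

variable {n : ℕ} (p : n.Partition)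

theorem card_parts_le : Multiset.card p.parts ≤ n :=
  (Multiset.card_le_sum_of_pos fun _ hx => p.parts_pos hx).trans_eq p.parts_sum

theorem parts_eq_replicate_one_iff {s : ℕ} :
    p.parts = Multiset.replicate s 1 ↔ Multiset.card p.parts = n ∧ s = n := by
  constructor
  · intro h
    have hsum := p.parts_sum
    rw [h] at hsum ⊢
    simp only [Multiset.card_replicate, Multiset.sum_replicate, smul_eq_mul, mul_one] at hsum ⊢
    exact ⟨hsum, hsum⟩
  · rintro ⟨hcard, rfl⟩
    conv_rhs => rw [← hcard]
    exact Multiset.eq_replicate_one_of_card_eq_sum (fun _ hx => p.parts_pos hx)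
      (hcard.trans p.parts_sum.symm)

theorem parts_eq_two_cons_replicate_one_iff {s : ℕ} :
    p.parts = 2 ::ₘ Multiset.replicate s 1 ↔ Multiset.card p.parts + 1 = n ∧ s + 2 = n := by
  constructor
  · intro h
    have hsum := p.parts_sum
    rw [h] at hsum ⊢
    simp only [Multiset.card_cons, Multiset.card_replicate, Multiset.sum_cons,
      Multiset.sum_replicate, smul_eq_mul, mul_one] at hsum ⊢
    omega
  · rintro ⟨hcard, rfl⟩
    rw [Multiset.eq_two_cons_replicate_one_of_card_add_one_eq_sum (fun _ hx => p.parts_pos hx)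
      (hcard.trans p.parts_sum.symm)]
    congr 2
    omega

end Nat.Partition

namespace AddBox

variable {lam mu : Multiset ℕ}

theorem sum_eq (h : AddBox lam mu) : mu.sum = lam.sum + 1 := by
  rcases h with rfl | ⟨a, ha, rfl⟩
  · simp [add_comm]
  · rw [← Multiset.cons_erase ha]
    simp only [Multiset.sum_cons, Multiset.erase_cons_head]
    omega

theorem card_le_card_add_one (h : AddBox lam mu) : Multiset.card mu ≤ Multiset.card lam + 1 := by
  rcases h with rfl | ⟨a, ha, rfl⟩
  · simp
  · have := Multiset.card_erase_add_one ha
    simp only [Multiset.card_cons]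
    omega

theorem card_le_card (h : AddBox lam mu) : Multiset.card lam ≤ Multiset.card mu := by
  rcases h with rfl | ⟨a, ha, rfl⟩
  · simp
  · have := Multiset.card_erase_add_one ha
    simp only [Multiset.card_cons]
    omega

end AddBox

theorem BRT.k_le_left {m n : ℕ} (γ : BRT m n) : γ.k ≤ m := γ.k_le.trans (min_le_left _ _)

theorem IsParent.ht_add_k_le {m n₁ n₂ : ℕ} {γ : BRT m n₁} {γ' : BRT m n₂} (h : IsParent γ γ') :
    γ'.ht + γ'.k ≤ γ.ht + γ.k := by
  unfold BRT.ht
  rcases h with ⟨hk, hp, hbox⟩ | ⟨hk, hm, hbox⟩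
  · have := hbox.card_le_card
    have := congrArg Multiset.card hp
    omega
  · have := hbox.card_le_card_add_one
    have := hbox.sum_eq
    have := γ.gp.parts_sum
    have := γ'.gp.parts_sum
    have := γ.k_le_left
    rw [hm]
    omega

theorem IsAncestor.ht_add_k_le {m n d d' : ℕ} {γ : BRT m (n - d)} {γ' : BRT m (n - d')}
    (h : IsAncestor m n d d' γ γ') : γ'.ht + γ'.k ≤ γ.ht + γ.k := by
  induction h with
  | step _ _ hp => exact hp.ht_add_k_le
  | tail _ _ hp ih => exact hp.ht_add_k_le.trans ih

theorem exists_isParent_ht_eq {m n₁ : ℕ} (n₂ : ℕ) (γ : BRT m n₁) (hk : 0 < γ.k)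
    (hn : n₂ + 1 = n₁) :
    ∃ γ' : BRT m n₂, IsParent γ γ' ∧ γ'.k + 1 = γ.k ∧ γ'.ht = γ.ht + 1 := by
  have hkm := γ.k_le
  refine ⟨BRT.mk (γ.k - 1) (by omega) ⟨1 ::ₘ γ.gp.parts, ?_, ?_⟩
    ⟨γ.gm.parts, γ.gm.parts_pos, ?_⟩, Or.inr ⟨rfl, rfl, Or.inl rfl⟩, Nat.sub_add_cancel hk, ?_⟩
  · intro i hi
    rcases Multiset.mem_cons.1 hi with rfl | hi
    exacts [one_pos, γ.gp.parts_pos hi]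
  · have := γ.gp.parts_sum
    simp only [Multiset.sum_cons]
    omega
  · have := γ.gm.parts_sum
    omega
  · simp only [BRT.ht, Multiset.card_cons]
    omega

theorem exists_isAncestor_ht_eq {m n d : ℕ} (γ : BRT m (n - d)) {j : ℕ} (hj : 0 < j)
    (hjk : j ≤ γ.k) :
    ∃ γ' : BRT m (n - (d + j)), IsAncestor m n d (d + j) γ γ' ∧ γ'.k + j = γ.k ∧
      γ'.ht = γ.ht + j := by
  have hkn : γ.k ≤ n - d := γ.k_le.trans (min_le_right _ _)
  induction j, hj using Nat.le_induction with
  | base =>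
    obtain ⟨γ', hp, hk, hht⟩ := exists_isParent_ht_eq (n - (d + 1)) γ hjk (by omega)
    exact ⟨γ', .step γ γ' hp, hk, hht⟩
  | succ j hj ih =>
    specialize ih (Nat.le_of_succ_le hjk)
    obtain ⟨γ₁, hanc, hk₁, hht₁⟩ := ih
    have hn : n - (d + (j + 1)) + 1 = n - (d + j) := by omega
    have hpos : 0 < γ₁.k := by omega
    obtain ⟨γ₂, hp, hk₂, hht₂⟩ := exists_isParent_ht_eq _ γ₁ hpos hn
    refine ⟨γ₂, .tail γ₂ hanc hp, ?_, ?_⟩ <;> omega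

theorem exists_isAncestor_lt_ht_iff {m n d N : ℕ} (γ : BRT m (n - d)) (hγ : γ.ht ≤ N) :
    (∃ d' : ℕ, ∃ γ' : BRT m (n - d'), IsAncestor m n d d' γ γ' ∧ N < γ'.ht) ↔
      N < γ.ht + γ.k := by
  constructor
  · rintro ⟨d', γ', hanc, hlt⟩
    have := hanc.ht_add_k_le
    omega
  · intro hlt
    obtain ⟨γ', hanc, -, hht⟩ := exists_isAncestor_ht_eq γ (j := γ.k) (by omega) le_rfl
    exact ⟨_, γ', hanc, by omega⟩

namespace BRT

variable {m n : ℕ}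

theorem ht_le_lt_ht_add_k_iff (hm : 3 ≤ m) (hn : 3 ≤ n) (γ : BRT m n) :
    (γ.ht ≤ m + n - 3 ∧ m + n - 3 < γ.ht + γ.k) ↔
      ((γ.k = 1 ∧ γ.gp.parts = 2 ::ₘ Multiset.replicate (m - 3) 1 ∧
            γ.gm.parts = Multiset.replicate (n - 1) 1) ∨
         (γ.k = 1 ∧ γ.gp.parts = Multiset.replicate (m - 1) 1 ∧
            γ.gm.parts = 2 ::ₘ Multiset.replicate (n - 3) 1) ∨
         (γ.k = 2 ∧ γ.gp.parts = Multiset.replicate (m - 2) 1 ∧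
            γ.gm.parts = Multiset.replicate (n - 2) 1)) := by
  have := γ.gp.card_parts_le
  have := γ.gm.card_parts_le
  have := γ.k_le
  simp only [Nat.Partition.parts_eq_replicate_one_iff,
    Nat.Partition.parts_eq_two_cons_replicate_one_iff, ht]
  omega

def data (γ : BRT m n) : ℕ × Multiset ℕ × Multiset ℕ := (γ.k, γ.gp.parts, γ.gm.parts)

theorem data_injective : Function.Injective (data (m := m) (n := n)) := by
  rintro ⟨k, hk, p, q⟩ ⟨k', hk', p', q'⟩ h
  obtain ⟨rfl, hp, hq⟩ := Prod.ext_iff.1 h |>.imp_right Prod.ext_iff.1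
  obtain rfl := Nat.Partition.ext hp
  obtain rfl := Nat.Partition.ext hq
  rfl

theorem mk_mem_range_data {k : ℕ} {a b : Multiset ℕ} (hk : k ≤ min m n) (ha : ∀ x ∈ a, 0 < x)
    (hb : ∀ x ∈ b, 0 < x) (hsa : a.sum = m - k) (hsb : b.sum = n - k) :
    (k, a, b) ∈ Set.range (data (m := m) (n := n)) :=
  ⟨⟨k, hk, ⟨a, ha _, hsa⟩, ⟨b, hb _, hsb⟩⟩, rfl⟩

theorem card_ht_le_lt_ht_add_k (hm : 3 ≤ m) (hn : 3 ≤ n) :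
    Nat.card {γ : BRT m n // γ.ht ≤ m + n - 3 ∧ m + n - 3 < γ.ht + γ.k} = 3 := by
  set T : Set (ℕ × Multiset ℕ × Multiset ℕ) :=
    {(1, 2 ::ₘ Multiset.replicate (m - 3) 1, Multiset.replicate (n - 1) 1),
      (1, Multiset.replicate (m - 1) 1, 2 ::ₘ Multiset.replicate (n - 3) 1),
      (2, Multiset.replicate (m - 2) 1, Multiset.replicate (n - 2) 1)} with hT
  have hpre : ∀ γ : BRT m n, (γ.ht ≤ m + n - 3 ∧ m + n - 3 < γ.ht + γ.k) ↔ γ ∈ data ⁻¹' T :=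
    fun γ => (ht_le_lt_ht_add_k_iff hm hn γ).trans (by simp [hT, data])
  have hrange : T ⊆ Set.range (data (m := m) (n := n)) := by
    simp only [hT, Set.insert_subset_iff, Set.singleton_subset_iff]
    refine ⟨mk_mem_range_data ?_ ?_ ?_ ?_ ?_, mk_mem_range_data ?_ ?_ ?_ ?_ ?_,
      mk_mem_range_data ?_ ?_ ?_ ?_ ?_⟩ <;> simp [Multiset.mem_replicate] <;> omega
  rw [Nat.card_congr (Equiv.subtypeEquivRight hpre), Nat.card_coe_set_eq,
    Set.ncard_preimage_of_injective_subset_range data_injective hrange]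
  refine Set.ncard_eq_three.2 ⟨_, _, _, fun h => ?_, by simp, by simp, hT⟩
  simpa [Multiset.mem_replicate] using congrArg (fun t => 2 ∈ t.2.1) h

end BRT

theorem zuniv_two : Zuniv 2 = 3 := by
  refine (Nat.card_coe_set_eq _).trans (Set.ncard_eq_three.2
    ⟨((2, 0), ⟨0, default⟩, ⟨0, default⟩), ((1, 0), ⟨1, default⟩, ⟨0, default⟩),
      ((1, 0), ⟨0, default⟩, ⟨1, default⟩), by simp, by simp, by simp, ?_⟩)
  ext ⟨⟨D, k⟩, ⟨a, l₁⟩, ⟨b, l₂⟩⟩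
  simp only [Set.mem_insert_iff, Set.mem_singleton_iff]
  change 1 ≤ D ∧ D + 2 * k + a + b = 2 ↔ _
  constructor
  · rintro ⟨hD, hsum⟩
    obtain ⟨rfl, rfl, rfl, rfl⟩ | ⟨rfl, rfl, rfl, rfl⟩ | ⟨rfl, rfl, rfl, rfl⟩ :
        (D = 2 ∧ k = 0 ∧ a = 0 ∧ b = 0) ∨ (D = 1 ∧ k = 0 ∧ a = 1 ∧ b = 0) ∨
          (D = 1 ∧ k = 0 ∧ a = 0 ∧ b = 1) := by omega
    all_goals simp [Subsingleton.elim l₁ default, Subsingleton.elim l₂ default]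
  · rintro (h | h | h) <;> simp only [Prod.mk.injEq, Sigma.mk.injEq] at h <;> omega

/-- Modified triples for `l = 3`: for `m, n ≥ 3` and `N = m + n - 3`, the Brauer
representation triples `γ` for `(m,n)` with `ht(γ) ≤ N` possessing at least one
`N`-excluded ancestor are exactly the three triples `(1, [2,1^{m-3}], 1^{n-1})`,
`(1, 1^{m-1}, [2,1^{n-3}])` and `(2, 1^{m-2}, 1^{n-2})`; in particular there are exactly
`3 = Z_univ(2)` of them. -/
theorem stmt18 (m n : ℕ) (hm : 3 ≤ m) (hn : 3 ≤ n) :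
    (∀ γ : BRT m (n - 0),
      (γ.ht ≤ m + n - 3 ∧
        ∃ d' : ℕ, ∃ γ' : BRT m (n - d'),
          IsAncestor m n 0 d' γ γ' ∧ m + n - 3 < γ'.ht) ↔
        ((γ.k = 1 ∧ γ.gp.parts = 2 ::ₘ Multiset.replicate (m - 3) 1 ∧
            γ.gm.parts = Multiset.replicate (n - 1) 1) ∨
         (γ.k = 1 ∧ γ.gp.parts = Multiset.replicate (m - 1) 1 ∧
            γ.gm.parts = 2 ::ₘ Multiset.replicate (n - 3) 1) ∨
         (γ.k = 2 ∧ γ.gp.parts = Multiset.replicate (m - 2) 1 ∧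
            γ.gm.parts = Multiset.replicate (n - 2) 1))) ∧
    Nat.card {γ : BRT m (n - 0) //
        γ.ht ≤ m + n - 3 ∧
        ∃ d' : ℕ, ∃ γ' : BRT m (n - d'),
          IsAncestor m n 0 d' γ γ' ∧ m + n - 3 < γ'.ht} = 3 ∧
    Zuniv 2 = 3 := by
  have hexcluded : ∀ γ : BRT m (n - 0),
      (γ.ht ≤ m + n - 3 ∧ ∃ d' : ℕ, ∃ γ' : BRT m (n - d'),
          IsAncestor m n 0 d' γ γ' ∧ m + n - 3 < γ'.ht) ↔
        γ.ht ≤ m + n - 3 ∧ m + n - 3 < γ.ht + γ.k :=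
    fun γ => and_congr_right (exists_isAncestor_lt_ht_iff γ)
  refine ⟨fun γ => (hexcluded γ).trans (BRT.ht_le_lt_ht_add_k_iff hm hn γ), ?_, zuniv_two⟩
  rw [Nat.card_congr (Equiv.subtypeEquivRight hexcluded)]
  exact BRT.card_ht_le_lt_ht_add_k hm hn
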